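/- arXiv:1803.02513 — 2 statements merged into one kernel-verified Lean document; each statement's English description precedes it below -/
import Mathlib

section
/- For v ∈ (1/2, 1), there exists t* ∈ (0,∞) such that the function h_v(t) = (cosh(vt) + v·sinh(vt)·sinh t) / ((cosh t + 1)·cosh(vt)) is strictly increasing on (0,t*) and strictly decreasing on (t*,∞); consequently 1/2 < h_v(t) ≤ h_v(t*) for all t > 0. -/
open Real Filter Set Topology

/-!
Write `h_v = N / D`; then `D ^ 2 * h_v' = G` with `G = hDerivNum v` a combination of the
functions `sinh (l t)`, `l ∈ {2, 1, 2v, 2v + 1, 2v - 1}`. Put `c = 2v + 1`. The derivative of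
`G / sinh (c t)` is, up to the factor `sinh (c t) ^ 2`, the same combination of the Wronskians
`W(sinh (c ·), sinh (l ·))`; these are negative for `0 < l < c` and vanish for `l = c`, and the one
coefficient that can be negative, that of `l = 1`, is absorbed using `W_{2v} ≤ W_1` (by the
product-to-sum formulas, a sinh combination vanishing to second order at `0` with nonnegative
second derivative). So
`G / sinh (c t)` is strictly decreasing. It is positive near `0` because `G'(0) = 4v² - 1 > 0` and
negative for large `t` because the term `(v - 1)/4 * sinh (c t)` dominates, so `G`, and with it
`h_v'`, changes sign exactly once.
-/

lemma nonneg_of_hasDerivAt_nonneg {f f' : ℝ → ℝ} (hf : ∀ x, HasDerivAt f (f' x) x)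
    (h₀ : f 0 = 0) (hf' : ∀ x, 0 ≤ x → 0 ≤ f' x) {x : ℝ} (hx : 0 ≤ x) : 0 ≤ f x := by
  have hmono : MonotoneOn f (Ici 0) :=
    monotoneOn_of_hasDerivWithinAt_nonneg (convex_Ici 0)
      (fun y _ => (hf y).continuousAt.continuousWithinAt)
      (fun y _ => (hf y).hasDerivWithinAt) (fun y hy => hf' y (interior_subset hy))
  simpa [h₀] using hmono self_mem_Ici hx hx

lemma HasDerivAt.exists_gt_apply_lt {f : ℝ → ℝ} {f' a : ℝ} (hf : HasDerivAt f f' a)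
    (hf' : 0 < f') : ∃ b > a, f a < f b := by
  have hslope : Tendsto (slope f a) (𝓝[>] a) (𝓝 f') :=
    (hasDerivAt_iff_tendsto_slope.1 hf).mono_left (nhdsWithin_mono a fun _ hx => ne_of_gt hx)
  obtain ⟨b, hb, hab⟩ := ((hslope.eventually (eventually_gt_nhds hf')).and
    self_mem_nhdsWithin).exists
  refine ⟨b, hab, ?_⟩
  rw [slope_def_field, div_pos_iff_of_pos_right (sub_pos.2 hab)] at hb
  exact sub_pos.1 hb

lemma StrictAntiOn.exists_sign_change {R : ℝ → ℝ} {x₀ a b : ℝ}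
    (hR : StrictAntiOn R (Ioi x₀)) (hcont : ContinuousOn R (Ioi x₀)) (ha : x₀ < a)
    (hRa : 0 < R a) (hb : x₀ < b) (hRb : R b < 0) :
    ∃ c > x₀, (∀ t ∈ Ioo x₀ c, 0 < R t) ∧ ∀ t ∈ Ioi c, R t < 0 := by
  have hab : a < b := by
    by_contra! hba
    exact (hRb.trans hRa).not_ge (hR.antitoneOn hb ha hba)
  obtain ⟨c, hc, hRc⟩ := intermediate_value_Icc' hab.le
    (hcont.mono fun x hx => ha.trans_le hx.1) ⟨hRb.le, hRa.le⟩
  have hc₀ : x₀ < c := ha.trans_le hc.1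
  refine ⟨c, hc₀, fun t ht => ?_, fun t ht => ?_⟩
  · exact hRc ▸ hR ht.1 hc₀ ht.2
  · exact hRc ▸ hR hc₀ (hc₀.trans ht) ht

namespace Real

lemma hasDerivAt_sinh_mul (l t : ℝ) :
    HasDerivAt (fun t => sinh (l * t)) (l * cosh (l * t)) t := by
  simpa [mul_comm] using ((hasDerivAt_id t).const_mul l).sinh

lemma hasDerivAt_cosh_mul (l t : ℝ) :
    HasDerivAt (fun t => cosh (l * t)) (l * sinh (l * t)) t := by
  simpa [mul_comm] using ((hasDerivAt_id t).const_mul l).cosh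

lemma sub_mul_cosh_lt_sinh_sub_sinh {x y : ℝ} (hx : 0 ≤ x) (hxy : x < y) :
    (y - x) * cosh x < sinh y - sinh x := by
  rw [mul_comm]
  refine (convex_Icc x y).mul_sub_lt_image_sub_of_lt_deriv continuous_sinh.continuousOn
    differentiable_sinh.differentiableOn (fun z hz => ?_) x (left_mem_Icc.2 hxy.le) y
    (right_mem_Icc.2 hxy.le) hxy
  rw [interior_Icc] at hz
  rw [deriv_sinh]
  exact cosh_strictMonoOn hx (hx.trans hz.1.le) hz.1

lemma sub_mul_cosh_le_sinh_sub_sinh {x y : ℝ} (hx : 0 ≤ x) (hxy : x ≤ y) :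
    (y - x) * cosh x ≤ sinh y - sinh x := by
  rcases hxy.eq_or_lt with rfl | hxy
  · simp
  · exact (sub_mul_cosh_lt_sinh_sub_sinh hx hxy).le

lemma sinh_sub_sinh_le_sub_mul_cosh {x y : ℝ} (hx : 0 ≤ x) (hxy : x ≤ y) :
    sinh y - sinh x ≤ (y - x) * cosh y := by
  rw [mul_comm]
  refine (convex_Icc x y).image_sub_le_mul_sub_of_deriv_le continuous_sinh.continuousOn
    differentiable_sinh.differentiableOn (fun z hz => ?_) x (left_mem_Icc.2 hxy) y
    (right_mem_Icc.2 hxy) hxy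
  rw [interior_Icc] at hz
  rw [deriv_sinh]
  exact cosh_strictMonoOn.monotoneOn (hx.trans hz.1.le) (hx.trans hxy) hz.2.le

lemma mul_sinh_lt_mul_sinh {x y : ℝ} (hx : 0 < x) (hxy : x < y) :
    y * sinh x < x * sinh y := by
  have h₁ := sub_mul_cosh_lt_sinh_sub_sinh hx.le hxy
  have h₂ : sinh x ≤ x * cosh x := by simpa using sinh_sub_sinh_le_sub_mul_cosh le_rfl hx.le
  nlinarith [mul_lt_mul_of_pos_left h₁ hx, mul_le_mul_of_nonneg_left h₂ (sub_nonneg.2 hxy.le)]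

end Real

/-- The Wronskian `W` of `sinh (c ·)` and `sinh (l ·)`, so that
`(sinh (l t) / sinh (c t))' = W / sinh (c t) ^ 2`. -/
noncomputable def sinhWronskian (c l t : ℝ) : ℝ :=
  sinh (c * t) * (l * cosh (l * t)) - c * cosh (c * t) * sinh (l * t)

lemma sinhWronskian_eq (c l t : ℝ) :
    sinhWronskian c l t = ((l - c) * sinh ((l + c) * t) + (l + c) * sinh ((c - l) * t)) / 2 := by
  rw [sinhWronskian, add_mul, sub_mul (c := t), sinh_add, sinh_sub]
  ring

lemma sinhWronskian_neg {c l t : ℝ} (hl : 0 < l) (hlc : l < c) (ht : 0 < t) :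
    sinhWronskian c l t < 0 := by
  have h := mul_sinh_lt_mul_sinh (mul_pos (sub_pos.2 hlc) ht)
    (mul_lt_mul_of_pos_right (by linarith : c - l < l + c) ht)
  rw [sinhWronskian_eq]
  nlinarith

lemma sinh_combination_second_deriv_nonneg {a t : ℝ} (ha : 1 ≤ a) (ht : 0 ≤ t) :
    0 ≤ (2 * a + 1) ^ 2 * sinh ((2 * a + 1) * t) - a * (a + 2) ^ 2 * sinh ((a + 2) * t)
      + a ^ 2 * (a + 2) * sinh (a * t) - (2 * a + 1) * sinh t := by
  have ha₁ : 0 ≤ a - 1 := sub_nonneg.2 ha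
  have hA := sub_mul_cosh_le_sinh_sub_sinh (x := (a + 2) * t) (y := (2 * a + 1) * t)
    (by positivity) (by nlinarith)
  have hC := sinh_sub_sinh_le_sub_mul_cosh (x := a * t) (y := (a + 2) * t)
    (by positivity) (by nlinarith)
  have h₁ : sinh t ≤ sinh (a * t) := sinh_le_sinh.2 (by nlinarith)
  -- the expression is the sum of these five nonnegative terms
  have e₁ := mul_nonneg (sq_nonneg (2 * a + 1)) (sub_nonneg.2 hA)
  have hcube : 0 ≤ a ^ 3 - 1 := by
    nlinarith [mul_nonneg ha₁ (by positivity : (0 : ℝ) ≤ a ^ 2 + a + 1)]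
  have e₂ := mul_nonneg hcube (sub_nonneg.2 hC)
  have e₃ := mul_nonneg (by positivity : (0 : ℝ) ≤ 2 * a ^ 2 + 1) (sub_nonneg.2 h₁)
  have e₄ := mul_nonneg (mul_nonneg (mul_nonneg ha₁
    (by nlinarith : (0 : ℝ) ≤ 2 * a ^ 2 + 2 * a - 1)) ht) (cosh_pos ((a + 2) * t)).le
  have e₅ := mul_nonneg (mul_nonneg (by linarith : (0 : ℝ) ≤ 2 * a) ha₁)
    (sinh_nonneg_iff.2 ht)
  linarith

lemma sinh_combination_nonneg {a t : ℝ} (ha : 1 ≤ a) (ht : 0 ≤ t) :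
    0 ≤ sinh ((2 * a + 1) * t) - a * sinh ((a + 2) * t) + (a + 2) * sinh (a * t)
      - (2 * a + 1) * sinh t := by
  have hsinh : ∀ x, HasDerivAt (fun t => sinh ((2 * a + 1) * t) - a * sinh ((a + 2) * t)
      + (a + 2) * sinh (a * t) - (2 * a + 1) * sinh t)
      ((2 * a + 1) * cosh ((2 * a + 1) * x) - a * (a + 2) * cosh ((a + 2) * x)
        + (a + 2) * a * cosh (a * x) - (2 * a + 1) * cosh x) x := fun x =>
    ((((hasDerivAt_sinh_mul (2 * a + 1) x).fun_sub
      ((hasDerivAt_sinh_mul (a + 2) x).const_mul a)).fun_add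
      ((hasDerivAt_sinh_mul a x).const_mul (a + 2))).fun_sub
      ((hasDerivAt_sinh x).const_mul (2 * a + 1))).congr_deriv (by ring)
  have hcosh : ∀ x, HasDerivAt (fun t => (2 * a + 1) * cosh ((2 * a + 1) * t)
      - a * (a + 2) * cosh ((a + 2) * t) + (a + 2) * a * cosh (a * t) - (2 * a + 1) * cosh t)
      ((2 * a + 1) ^ 2 * sinh ((2 * a + 1) * x) - a * (a + 2) ^ 2 * sinh ((a + 2) * x)
        + a ^ 2 * (a + 2) * sinh (a * x) - (2 * a + 1) * sinh x) x := fun x =>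
    (((((hasDerivAt_cosh_mul (2 * a + 1) x).const_mul (2 * a + 1)).fun_sub
      ((hasDerivAt_cosh_mul (a + 2) x).const_mul (a * (a + 2)))).fun_add
      ((hasDerivAt_cosh_mul a x).const_mul ((a + 2) * a))).fun_sub
      ((hasDerivAt_cosh x).const_mul (2 * a + 1))).congr_deriv (by ring)
  exact nonneg_of_hasDerivAt_nonneg hsinh (by simp) (fun x hx =>
    nonneg_of_hasDerivAt_nonneg hcosh (by simp only [mul_zero, cosh_zero, mul_one]; ring)
      (fun y hy => sinh_combination_second_deriv_nonneg ha hy) hx) ht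

lemma sinhWronskian_le_sinhWronskian_one {a t : ℝ} (ha : 1 ≤ a) (ht : 0 ≤ t) :
    sinhWronskian (a + 1) a t ≤ sinhWronskian (a + 1) 1 t := by
  have h := sinh_combination_nonneg ha ht
  rw [sinhWronskian_eq, sinhWronskian_eq, show (a + (a + 1)) * t = (2 * a + 1) * t by ring,
    show (a + 1 - a) * t = t by ring, show (1 + (a + 1)) * t = (a + 2) * t by ring,
    show (a + 1 - 1) * t = a * t by ring]
  linarith

noncomputable def hFun (v t : ℝ) : ℝ :=
  (cosh (v * t) + v * sinh (v * t) * sinh t) / ((cosh t + 1) * cosh (v * t))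

noncomputable def hDerivNum (v t : ℝ) : ℝ :=
  v ^ 2 / 2 * sinh (2 * t) + (v ^ 2 - 1 / 2) * sinh t + v / 2 * sinh (2 * v * t)
    + (v - 1) / 4 * sinh ((2 * v + 1) * t) + (v + 1) / 4 * sinh ((2 * v - 1) * t)

lemma hasDerivAt_hFun (v t : ℝ) :
    HasDerivAt (hFun v) (hDerivNum v t / ((cosh t + 1) * cosh (v * t)) ^ 2) t := by
  have hN : HasDerivAt (fun t => cosh (v * t) + v * sinh (v * t) * sinh t)
      (v * sinh (v * t) + (v * (v * cosh (v * t)) * sinh t + v * sinh (v * t) * cosh t)) t :=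
    (hasDerivAt_cosh_mul v t).fun_add
      (((hasDerivAt_sinh_mul v t).const_mul v).fun_mul (hasDerivAt_sinh t))
  have hD : HasDerivAt (fun t => (cosh t + 1) * cosh (v * t))
      (sinh t * cosh (v * t) + (cosh t + 1) * (v * sinh (v * t))) t :=
    ((hasDerivAt_cosh t).add_const 1).fun_mul (hasDerivAt_cosh_mul v t)
  refine (hN.div hD (by positivity)).congr_deriv ?_
  congr 1
  rw [hDerivNum, sinh_two_mul, show 2 * v * t = 2 * (v * t) by ring, sinh_two_mul,
    show (2 * v + 1) * t = v * t + (v * t + t) by ring,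
    show (2 * v - 1) * t = v * t + (v * t - t) by ring]
  simp only [sinh_add, cosh_add, sinh_sub, cosh_sub]
  linear_combination v * sinh (v * t) * cosh (v * t) * cosh_sq_sub_sinh_sq t
    + (v ^ 2 * sinh t * (cosh t + 1) - sinh t / 2) * cosh_sq_sub_sinh_sq (v * t)

lemma half_lt_hFun {v t : ℝ} (hv : 1 / 2 < v) (ht : 0 < t) : 1 / 2 < hFun v t := by
  have hsinh : sinh t = 2 * sinh (t / 2) * cosh (t / 2) := by
    rw [← sinh_two_mul]; ring_nf
  have hcosh : cosh t = cosh (t / 2) ^ 2 + sinh (t / 2) ^ 2 := by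
    rw [← cosh_two_mul]; ring_nf
  have key : 2 * (cosh (v * t) + v * sinh (v * t) * sinh t) - (cosh t + 1) * cosh (v * t)
      = 2 * sinh (t / 2) * ((2 * v - 1) * sinh (v * t) * cosh (t / 2) + sinh (v * t - t / 2)) := by
    rw [hsinh, hcosh, sinh_sub]
    linear_combination (-cosh (v * t)) * cosh_sq_sub_sinh_sq (t / 2)
  have hpos : 0 < 2 * sinh (t / 2) * ((2 * v - 1) * sinh (v * t) * cosh (t / 2)
      + sinh (v * t - t / 2)) := by
    have h₁ : 0 < sinh (t / 2) := sinh_pos_iff.2 (by linarith)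
    have h₂ : 0 < sinh (v * t) := sinh_pos_iff.2 (by nlinarith)
    have h₃ : 0 < sinh (v * t - t / 2) := sinh_pos_iff.2 (by nlinarith)
    have h₄ : 0 < (2 * v - 1) * sinh (v * t) * cosh (t / 2) :=
      mul_pos (mul_pos (by linarith) h₂) (cosh_pos _)
    positivity
  rw [hFun, lt_div_iff₀ (by positivity)]
  linarith

lemma hasDerivAt_hDerivNum (v t : ℝ) :
    HasDerivAt (hDerivNum v) (v ^ 2 / 2 * (2 * cosh (2 * t)) + (v ^ 2 - 1 / 2) * cosh t
      + v / 2 * (2 * v * cosh (2 * v * t)) + (v - 1) / 4 * ((2 * v + 1) * cosh ((2 * v + 1) * t))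
      + (v + 1) / 4 * ((2 * v - 1) * cosh ((2 * v - 1) * t))) t :=
  (((((hasDerivAt_sinh_mul 2 t).const_mul (v ^ 2 / 2)).fun_add
    ((hasDerivAt_sinh t).const_mul (v ^ 2 - 1 / 2))).fun_add
    ((hasDerivAt_sinh_mul (2 * v) t).const_mul (v / 2))).fun_add
    ((hasDerivAt_sinh_mul (2 * v + 1) t).const_mul ((v - 1) / 4))).fun_add
    ((hasDerivAt_sinh_mul (2 * v - 1) t).const_mul ((v + 1) / 4))

lemma hasDerivAt_hDerivNum_div_sinh {v t : ℝ} (ht : sinh ((2 * v + 1) * t) ≠ 0) :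
    HasDerivAt (fun t => hDerivNum v t / sinh ((2 * v + 1) * t))
      ((v ^ 2 / 2 * sinhWronskian (2 * v + 1) 2 t
        + (v ^ 2 - 1 / 2) * sinhWronskian (2 * v + 1) 1 t
        + v / 2 * sinhWronskian (2 * v + 1) (2 * v) t
        + (v + 1) / 4 * sinhWronskian (2 * v + 1) (2 * v - 1) t)
        / sinh ((2 * v + 1) * t) ^ 2) t := by
  refine ((hasDerivAt_hDerivNum v t).div (hasDerivAt_sinh_mul _ t) ht).congr_deriv ?_
  simp only [hDerivNum, sinhWronskian, one_mul]
  ring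

lemma strictAntiOn_hDerivNum_div_sinh {v : ℝ} (hv : 1 / 2 < v) :
    StrictAntiOn (fun t => hDerivNum v t / sinh ((2 * v + 1) * t)) (Ioi 0) := by
  have hS : ∀ t ∈ Ioi (0 : ℝ), 0 < sinh ((2 * v + 1) * t) := fun t ht =>
    sinh_pos_iff.2 (mul_pos (by linarith) ht)
  refine strictAntiOn_of_hasDerivWithinAt_neg (convex_Ioi 0)
    (fun t ht => (hasDerivAt_hDerivNum_div_sinh (hS t ht).ne').continuousAt.continuousWithinAt)
    (fun t ht => (hasDerivAt_hDerivNum_div_sinh (hS t (interior_subset ht)).ne').hasDerivWithinAt)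
    (fun t ht => div_neg_of_neg_of_pos ?_ (pow_pos (hS t (interior_subset ht)) 2))
  rw [interior_Ioi] at ht
  have h₂ := sinhWronskian_neg two_pos (by linarith : (2 : ℝ) < 2 * v + 1) ht
  have h₁ := sinhWronskian_neg one_pos (by linarith : (1 : ℝ) < 2 * v + 1) ht
  have h₀ := sinhWronskian_neg (by linarith : 0 < 2 * v - 1)
    (by linarith : 2 * v - 1 < 2 * v + 1) ht
  -- the coefficient `v ^ 2 - 1 / 2` may be negative: the `2 * v` term absorbs it
  have hle := sinhWronskian_le_sinhWronskian_one (a := 2 * v) (by linarith) ht.le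
  nlinarith [mul_le_mul_of_nonneg_left hle (by linarith : 0 ≤ v / 2),
    mul_neg_of_pos_of_neg (by nlinarith : 0 < (2 * v - 1) * (v + 1) / 2) h₁]

lemma exists_hDerivNum_pos {v : ℝ} (hv : 1 / 2 < v) : ∃ t > 0, 0 < hDerivNum v t := by
  have h := hasDerivAt_hDerivNum v 0
  simp only [mul_zero, cosh_zero, mul_one] at h
  obtain ⟨t, ht, hlt⟩ := h.exists_gt_apply_lt (by nlinarith)
  exact ⟨t, ht, by simpa [hDerivNum] using hlt⟩

lemma exists_hDerivNum_neg {v : ℝ} (hv : v ∈ Ioo (1 / 2 : ℝ) 1) :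
    ∃ t > 0, hDerivNum v t < 0 := by
  obtain ⟨hv₁, hv₂⟩ := hv
  -- Every other term is at most `sinh (2 t) / 2`, while this `t` makes
  -- `cosh ((2v - 1) t) ≥ 8 / (1 - v)`, hence `(1 - v) / 4 * sinh ((2v + 1) t) ≥ 2 sinh (2 t)`.
  set t := 8 / ((1 - v) * (2 * v - 1))
  have ht : 0 < t := div_pos (by norm_num) (mul_pos (by linarith) (by linarith))
  refine ⟨t, ht, ?_⟩
  have hs₂ : 0 < sinh (2 * t) := sinh_pos_iff.2 (by linarith)
  have hs₁ : sinh t ≤ sinh (2 * t) := sinh_le_sinh.2 (by linarith)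
  have hs₁' : 0 ≤ sinh t := sinh_nonneg_iff.2 ht.le
  have hsv : sinh (2 * v * t) ≤ sinh (2 * t) := sinh_le_sinh.2 (by nlinarith)
  have hsv' : 0 ≤ sinh (2 * v * t) := sinh_nonneg_iff.2 (by positivity)
  have hsm : sinh ((2 * v - 1) * t) ≤ sinh (2 * t) := sinh_le_sinh.2 (by nlinarith)
  have hsm' : 0 ≤ sinh ((2 * v - 1) * t) := sinh_nonneg_iff.2 (mul_nonneg (by linarith) ht.le)
  have hcosh : 8 / (1 - v) ≤ cosh ((2 * v - 1) * t) := by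
    have : (2 * v - 1) * t = 8 / (1 - v) := by
      have : 2 * v - 1 ≠ 0 := by linarith
      simp only [t]
      field_simp
    rw [this]
    exact (self_le_sinh_iff.2 (by positivity)).trans (sinh_lt_cosh _).le
  have htop : sinh (2 * t) * cosh ((2 * v - 1) * t) ≤ sinh ((2 * v + 1) * t) := by
    rw [show (2 * v + 1) * t = 2 * t + (2 * v - 1) * t by ring, sinh_add]
    nlinarith [mul_nonneg (cosh_pos (2 * t)).le hsm']
  have hdom : 2 * sinh (2 * t) ≤ (1 - v) / 4 * sinh ((2 * v + 1) * t) := by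
    calc 2 * sinh (2 * t) = (1 - v) / 4 * (8 / (1 - v)) * sinh (2 * t) := by
          field_simp; ring
      _ ≤ (1 - v) / 4 * (sinh (2 * t) * cosh ((2 * v - 1) * t)) := by
          rw [mul_assoc, mul_comm (8 / (1 - v))]
          exact mul_le_mul_of_nonneg_left (mul_le_mul_of_nonneg_left hcosh hs₂.le)
            (by linarith)
      _ ≤ (1 - v) / 4 * sinh ((2 * v + 1) * t) :=
          mul_le_mul_of_nonneg_left htop (by linarith)
  rw [hDerivNum]
  nlinarith [mul_le_mul_of_nonneg_left hs₁' (by nlinarith : (0 : ℝ) ≤ 1 - v ^ 2),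
    mul_lt_mul_of_pos_right (by nlinarith : v ^ 2 < 1) hs₂]

lemma exists_hDerivNum_sign_change {v : ℝ} (hv : v ∈ Ioo (1 / 2 : ℝ) 1) :
    ∃ c > 0, (∀ t ∈ Ioo 0 c, 0 < hDerivNum v t) ∧ ∀ t ∈ Ioi c, hDerivNum v t < 0 := by
  have hS : ∀ t ∈ Ioi (0 : ℝ), 0 < sinh ((2 * v + 1) * t) := fun t ht =>
    sinh_pos_iff.2 (mul_pos (by linarith [hv.1]) ht)
  obtain ⟨a, ha, hGa⟩ := exists_hDerivNum_pos hv.1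
  obtain ⟨b, hb, hGb⟩ := exists_hDerivNum_neg hv
  obtain ⟨c, hc, hpos, hneg⟩ := (strictAntiOn_hDerivNum_div_sinh hv.1).exists_sign_change
    (fun t ht => (hasDerivAt_hDerivNum_div_sinh (hS t ht).ne').continuousAt.continuousWithinAt)
    ha (div_pos hGa (hS a ha)) hb (div_neg_of_neg_of_pos hGb (hS b hb))
  refine ⟨c, hc, fun t ht => ?_, fun t ht => ?_⟩
  · exact (div_pos_iff_of_pos_right (hS t ht.1)).1 (hpos t ht)
  · simpa using (div_lt_iff₀ (hS t (hc.trans ht))).1 (hneg t ht)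

theorem stmt_11 (v : ℝ) (hv : v ∈ Ioo (1 / 2 : ℝ) 1) :
    ∃ tstar > (0 : ℝ),
      StrictMonoOn
        (fun t => (Real.cosh (v * t) + v * Real.sinh (v * t) * Real.sinh t) /
          ((Real.cosh t + 1) * Real.cosh (v * t))) (Ioo 0 tstar) ∧
      StrictAntiOn
        (fun t => (Real.cosh (v * t) + v * Real.sinh (v * t) * Real.sinh t) /
          ((Real.cosh t + 1) * Real.cosh (v * t))) (Ioi tstar) ∧
      ∀ t > (0 : ℝ),
        1 / 2 < (Real.cosh (v * t) + v * Real.sinh (v * t) * Real.sinh t) /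
          ((Real.cosh t + 1) * Real.cosh (v * t)) ∧
        (Real.cosh (v * t) + v * Real.sinh (v * t) * Real.sinh t) /
          ((Real.cosh t + 1) * Real.cosh (v * t)) ≤
        (Real.cosh (v * tstar) + v * Real.sinh (v * tstar) * Real.sinh tstar) /
          ((Real.cosh tstar + 1) * Real.cosh (v * tstar)) := by
  obtain ⟨c, hc, hpos, hneg⟩ := exists_hDerivNum_sign_change hv
  have hden : ∀ t, 0 < ((cosh t + 1) * cosh (v * t)) ^ 2 := fun t => by positivity
  have hcont : Continuous (hFun v) := continuous_iff_continuousAt.2 fun t =>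
    (hasDerivAt_hFun v t).continuousAt
  have hmono : StrictMonoOn (hFun v) (Icc 0 c) :=
    strictMonoOn_of_hasDerivWithinAt_pos (convex_Icc 0 c) hcont.continuousOn
      (fun t _ => (hasDerivAt_hFun v t).hasDerivWithinAt)
      (fun t ht => div_pos (hpos t (by rwa [interior_Icc] at ht)) (hden t))
  have hanti : StrictAntiOn (hFun v) (Ici c) :=
    strictAntiOn_of_hasDerivWithinAt_neg (convex_Ici c) hcont.continuousOn
      (fun t _ => (hasDerivAt_hFun v t).hasDerivWithinAt)
      (fun t ht => div_neg_of_neg_of_pos (hneg t (by rwa [interior_Ici] at ht)) (hden t))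
  refine ⟨c, hc, hmono.mono Ioo_subset_Icc_self, hanti.mono Ioi_subset_Ici_self,
    fun t ht => ⟨half_lt_hFun hv.1 ht, ?_⟩⟩
  rcases le_total t c with htc | hct
  · exact hmono.monotoneOn ⟨ht.le, htc⟩ ⟨hc.le, le_rfl⟩ htc
  · exact hanti.antitoneOn self_mem_Ici hct hct
end

section
/- Let v ≥ 0 with v ≠ 1/2 and let K_v(x) = ∫_0^∞ e^{−x·cosh t}·cosh(vt) dt for x > 0. Then for every x > 0, −x − max(v, 1/2) < x·K_v′(x)/K_v(x) < −x − min(v, 1/2). -/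
/-!
Write `J_n(x) = ∫_0^∞ cosh^n t · e^{-x cosh t} cosh(vt) dt`, so that `K = J_0` and `K' = -J_1`.
Integrating `d/dt [e^{-x cosh t}(x sinh t cosh(vt) + v sinh(vt))]` over `(0, ∞)` gives Bessel's
equation `x² J_2 = x J_1 + (x² + v²) J_0`, so `L = x K'/K + x` solves the Riccati equation
`L' = (v² - L²)/x + 2L + 1`; moreover `L ≤ 0` because `J_0 ≤ J_1`.

With `m = min v ½` and `M = max v ½`, the Riccati flow crosses the line `L = -m` only upwards
and `L = -M` only downwards. So if `L(x₀) ≥ -m`, then `L` stays in `[-m, 0]`, where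
`L' ≥ (v² - m²)/x + 1 - 2m`, which forces `L → ∞`. If `L(x₀) ≤ -M`, then likewise
`-L → ∞`, and eventually `(-L)' ≥ L²/(2x)`, so `1/L ≥ 1/L(x₁) + log(x/x₁)/2` becomes positive.
-/

open Real Filter Set MeasureTheory Topology

lemma one_add_sq_div_two_le_cosh (t : ℝ) : 1 + t ^ 2 / 2 ≤ cosh t := by
  wlog ht : 0 ≤ t generalizing t
  · simpa using this (-t) (by linarith)
  have hhalf : t / 2 ≤ sinh (t / 2) := self_le_sinh_iff.2 (by linarith)
  have hcosh : cosh t = 1 + 2 * sinh (t / 2) ^ 2 := by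
    have h := cosh_two_mul (t / 2)
    rw [mul_div_cancel₀ t two_ne_zero, cosh_sq] at h
    linarith
  nlinarith

lemma cosh_le_exp_abs (t : ℝ) : cosh t ≤ exp |t| := by
  rw [← cosh_abs, cosh_eq]
  linarith [exp_le_exp.2 (show -|t| ≤ |t| by linarith [abs_nonneg t])]

lemma abs_sinh_le_cosh (t : ℝ) : |sinh t| ≤ cosh t := by
  rw [abs_sinh, ← cosh_abs]
  exact (sinh_lt_cosh _).le

lemma mul_sub_mul_cosh_le (a : ℝ) {x : ℝ} (hx : 0 < x) (t : ℝ) :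
    a * t - x * cosh t ≤ a ^ 2 / (2 * x) := by
  have h1 := mul_le_mul_of_nonneg_left (one_add_sq_div_two_le_cosh t) hx.le
  have h2 : a * t - x * (t ^ 2 / 2) ≤ a ^ 2 / (2 * x) := by
    rw [le_div_iff₀ (by positivity)]
    nlinarith [sq_nonneg (a - x * t)]
  nlinarith

noncomputable def besselKIntegrand (v : ℝ) (n : ℕ) (x t : ℝ) : ℝ :=
  cosh t ^ n * (exp (-x * cosh t) * cosh (v * t))

noncomputable def besselKMoment (v : ℝ) (n : ℕ) (x : ℝ) : ℝ :=
  ∫ t in Ioi (0 : ℝ), besselKIntegrand v n x t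

namespace besselKIntegrand

variable (v : ℝ) (n : ℕ)

lemma pos (x t : ℝ) : 0 < besselKIntegrand v n x t := by
  unfold besselKIntegrand; positivity

lemma continuous (x : ℝ) : Continuous (besselKIntegrand v n x) := by
  unfold besselKIntegrand; fun_prop

lemma le_exp_neg {x : ℝ} (hx : 0 < x) {t : ℝ} (ht : 0 ≤ t) :
    besselKIntegrand v n x t ≤ exp ((n + |v| + 1) ^ 2 / (2 * x)) * exp (-t) := by
  have hn : cosh t ^ n ≤ exp (n * t) := by
    simpa [abs_of_nonneg ht, ← exp_nat_mul] using
      pow_le_pow_left₀ (cosh_pos t).le (cosh_le_exp_abs t) n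
  have hv : cosh (v * t) ≤ exp (|v| * t) := by
    simpa [abs_mul, abs_of_nonneg ht] using cosh_le_exp_abs (v * t)
  calc besselKIntegrand v n x t
      ≤ exp (n * t) * (exp (-x * cosh t) * exp (|v| * t)) := by
        unfold besselKIntegrand; gcongr
    _ = exp ((n + |v| + 1) * t - x * cosh t) * exp (-t) := by
        rw [← exp_add, ← exp_add, ← exp_add]; ring_nf
    _ ≤ exp ((n + |v| + 1) ^ 2 / (2 * x)) * exp (-t) := by
        gcongr; exact mul_sub_mul_cosh_le _ hx t

lemma integrableOn {x : ℝ} (hx : 0 < x) : IntegrableOn (besselKIntegrand v n x) (Ioi 0) := by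
  refine Integrable.mono' ((exp_neg_integrableOn_Ioi 0 one_pos).const_mul
    (exp ((n + |v| + 1) ^ 2 / (2 * x)))) (continuous v n x).aestronglyMeasurable ?_
  filter_upwards [ae_restrict_mem measurableSet_Ioi] with t ht
  rw [norm_of_nonneg (pos v n x t).le]
  simpa using le_exp_neg v n hx (le_of_lt ht)

end besselKIntegrand

lemma hasDerivAt_besselKBoundaryTerm (v x t : ℝ) :
    HasDerivAt (fun t => -(exp (-x * cosh t) * (x * sinh t * cosh (v * t) + v * sinh (v * t))))
      (x ^ 2 * besselKIntegrand v 2 x t - x * besselKIntegrand v 1 x t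
        - (x ^ 2 + v ^ 2) * besselKIntegrand v 0 x t) t := by
  have hvt : HasDerivAt (fun t => v * t) v t := by simpa using (hasDerivAt_id t).const_mul v
  have h := (((hasDerivAt_cosh t).const_mul (-x)).exp.mul
    ((((hasDerivAt_sinh t).const_mul x).mul hvt.cosh).add (hvt.sinh.const_mul v))).neg
  refine h.congr_deriv ?_
  simp only [besselKIntegrand, Pi.add_apply, Pi.mul_apply]
  linear_combination (-(exp (-x * cosh t) * cosh (v * t) * x ^ 2)) * cosh_sq t

lemma tendsto_besselKBoundaryTerm (v : ℝ) {x : ℝ} (hx : 0 < x) :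
    Tendsto (fun t => -(exp (-x * cosh t) * (x * sinh t * cosh (v * t) + v * sinh (v * t))))
      atTop (𝓝 0) := by
  have hdecay : Tendsto (fun t => (x + |v|) * (exp ((1 + |v| + 1) ^ 2 / (2 * x)) * exp (-t)))
      atTop (𝓝 0) := by
    simpa using (tendsto_exp_neg_atTop_nhds_zero.const_mul _).const_mul (x + |v|)
  refine squeeze_zero_norm' ?_ hdecay
  filter_upwards [eventually_ge_atTop 0] with t ht
  have hsum : |x * sinh t * cosh (v * t) + v * sinh (v * t)|
      ≤ (x + |v|) * (cosh t * cosh (v * t)) :=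
    calc _ ≤ |x * sinh t * cosh (v * t)| + |v * sinh (v * t)| := abs_add_le _ _
      _ = x * |sinh t| * cosh (v * t) + |v| * |sinh (v * t)| := by
        rw [abs_mul, abs_mul, abs_mul, abs_of_pos hx, abs_of_pos (cosh_pos _)]
      _ ≤ x * cosh t * cosh (v * t) + |v| * (cosh t * cosh (v * t)) := by
        gcongr
        · exact abs_sinh_le_cosh t
        · nlinarith [abs_sinh_le_cosh (v * t), one_le_cosh t, cosh_pos (v * t)]
      _ = _ := by ring
  rw [norm_neg, norm_mul, norm_of_nonneg (exp_pos _).le, Real.norm_eq_abs]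
  calc exp (-x * cosh t) * |x * sinh t * cosh (v * t) + v * sinh (v * t)|
      ≤ (x + |v|) * besselKIntegrand v 1 x t := by
        unfold besselKIntegrand
        nlinarith [mul_le_mul_of_nonneg_left hsum (exp_pos (-x * cosh t)).le]
    _ ≤ _ := by
        gcongr
        simpa using besselKIntegrand.le_exp_neg v 1 hx ht

namespace besselKMoment

variable (v : ℝ) (n : ℕ) {x : ℝ}

lemma pos (hx : 0 < x) : 0 < besselKMoment v n x := by
  rw [besselKMoment, setIntegral_pos_iff_support_of_nonneg_ae
    (Eventually.of_forall fun t => (besselKIntegrand.pos v n x t).le)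
    (besselKIntegrand.integrableOn v n hx)]
  have hsupp : Function.support (besselKIntegrand v n x) = univ :=
    Function.support_eq_univ fun t => (besselKIntegrand.pos v n x t).ne'
  simp [hsupp, volume_Ioi]

lemma le_succ (hx : 0 < x) : besselKMoment v n x ≤ besselKMoment v (n + 1) x := by
  refine setIntegral_mono_on (besselKIntegrand.integrableOn v n hx)
    (besselKIntegrand.integrableOn v (n + 1) hx) measurableSet_Ioi fun t _ => ?_
  have h := (besselKIntegrand.pos v n x t).le
  unfold besselKIntegrand at h ⊢
  rw [pow_succ]
  nlinarith [mul_le_mul_of_nonneg_left (one_le_cosh t) h]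

lemma hasDerivAt (hx : 0 < x) : HasDerivAt (besselKMoment v n) (-besselKMoment v (n + 1) x) x := by
  have hF' : ∀ y t, HasDerivAt (fun y => besselKIntegrand v n y t)
      (-besselKIntegrand v (n + 1) y t) y := by
    intro y t
    have hlin : HasDerivAt (fun y => -y * cosh t) (-cosh t) y := by
      simpa using (hasDerivAt_id y).neg.mul_const (cosh t)
    unfold besselKIntegrand
    exact ((hlin.exp.mul_const (cosh (v * t))).const_mul (cosh t ^ n)).congr_deriv
      (by rw [pow_succ]; ring)
  have hbound : ∀ t, ∀ y ∈ Metric.ball x (x / 2),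
      ‖-besselKIntegrand v (n + 1) y t‖ ≤ besselKIntegrand v (n + 1) (x / 2) t := by
    intro t y hy
    rw [Metric.mem_ball, Real.dist_eq, abs_sub_lt_iff] at hy
    rw [norm_neg, norm_of_nonneg (besselKIntegrand.pos v _ y t).le]
    unfold besselKIntegrand
    gcongr
    nlinarith [cosh_pos t]
  have h := hasDerivAt_integral_of_dominated_loc_of_deriv_le
    (μ := volume.restrict (Ioi 0)) (Metric.ball_mem_nhds x (half_pos hx))
    (Eventually.of_forall fun y => (besselKIntegrand.continuous v n y).aestronglyMeasurable)
    (besselKIntegrand.integrableOn v n hx)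
    (besselKIntegrand.continuous v (n + 1) x).neg.aestronglyMeasurable
    (Eventually.of_forall hbound) (besselKIntegrand.integrableOn v (n + 1) (half_pos hx))
    (Eventually.of_forall fun t y _ => hF' y t)
  rw [besselKMoment, ← integral_neg]
  exact h.2

lemma ode (hx : 0 < x) :
    x ^ 2 * besselKMoment v 2 x
      = x * besselKMoment v 1 x + (x ^ 2 + v ^ 2) * besselKMoment v 0 x := by
  have hI := fun n => besselKIntegrand.integrableOn v n hx
  have h := integral_Ioi_of_hasDerivAt_of_tendsto (Continuous.continuousWithinAt (by fun_prop))
    (fun t _ => hasDerivAt_besselKBoundaryTerm v x t)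
    (((hI 2).const_mul _).sub ((hI 1).const_mul _) |>.sub ((hI 0).const_mul _))
    (tendsto_besselKBoundaryTerm v hx)
  rw [integral_sub (by exact ((hI 2).const_mul _).sub ((hI 1).const_mul _))
      (by exact (hI 0).const_mul _),
    integral_sub (by exact (hI 2).const_mul _) (by exact (hI 1).const_mul _),
    integral_const_mul, integral_const_mul, integral_const_mul] at h
  simp only [sinh_zero, mul_zero, zero_mul, add_zero, neg_zero, sub_zero] at h
  simp only [besselKMoment]
  linarith

end besselKMoment

-- Equal to `x K'/K + x`, since `K = besselKMoment v 0` and `K' = -besselKMoment v 1`.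
noncomputable def besselKRiccati (v x : ℝ) : ℝ :=
  x - x * besselKMoment v 1 x / besselKMoment v 0 x

section RiccatiFunction

variable {v x : ℝ}

lemma besselKRiccati_nonpos (hx : 0 < x) : besselKRiccati v x ≤ 0 := by
  have h0 := besselKMoment.pos v 0 hx
  have h01 := besselKMoment.le_succ v 0 hx
  rw [besselKRiccati, sub_nonpos, mul_div_assoc]
  exact le_mul_of_one_le_right hx.le ((one_le_div h0).2 h01)

lemma hasDerivAt_besselKRiccati (hx : 0 < x) :
    HasDerivAt (besselKRiccati v)
      ((v ^ 2 - besselKRiccati v x ^ 2) / x + 2 * besselKRiccati v x + 1) x := by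
  have h0 := besselKMoment.pos v 0 hx
  have h := (hasDerivAt_id' x).sub (((hasDerivAt_id' x).mul (besselKMoment.hasDerivAt v 1 hx)).div
    (besselKMoment.hasDerivAt v 0 hx) h0.ne')
  refine h.congr_deriv ?_
  simp only [besselKRiccati, Pi.mul_apply, zero_add, one_add_one_eq_two]
  field_simp
  linear_combination (besselKMoment v 0 x) * besselKMoment.ode v hx

end RiccatiFunction

lemma le_of_hasDerivAt_pos_of_eq {f f' : ℝ → ℝ} {a c : ℝ}
    (hf : ∀ y ≥ a, HasDerivAt f (f' y) y) (ha : c ≤ f a)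
    (hc : ∀ y ≥ a, f y = c → 0 < f' y) {y : ℝ} (hy : a ≤ y) : c ≤ f y :=
  image_le_of_deriv_right_lt_deriv_boundary' continuousOn_const
    (fun z _ => hasDerivWithinAt_const z _ c) ha
    (fun z hz => (hf z hz.1).continuousAt.continuousWithinAt)
    (fun z hz => (hf z hz.1).hasDerivWithinAt) (fun z hz hcz => hc z hz.1 hcz.symm)
    ⟨hy, le_rfl⟩

lemma tendsto_atTop_of_hasDerivAt_ge {f f' G G' : ℝ → ℝ} {a : ℝ}
    (hf : ∀ y ≥ a, HasDerivAt f (f' y) y) (hG : ∀ y ≥ a, HasDerivAt G (G' y) y)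
    (hle : ∀ y ≥ a, G' y ≤ f' y) (hGtop : Tendsto G atTop atTop) :
    Tendsto f atTop atTop := by
  have hmono : MonotoneOn (fun y => f y - G y) (Ici a) := by
    refine monotoneOn_of_hasDerivWithinAt_nonneg (convex_Ici a)
      (fun y hy => ((hf y hy).sub (hG y hy)).continuousAt.continuousWithinAt)
      (fun y hy => ((hf y ?_).sub (hG y ?_)).hasDerivWithinAt) (fun y hy => ?_)
    all_goals rw [interior_Ici] at hy
    · exact hy.le
    · exact hy.le
    · exact sub_nonneg.2 (hle y hy.le)
  refine tendsto_atTop_mono' _ ?_ (tendsto_atTop_add_const_right _ (f a - G a) hGtop)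
  filter_upwards [eventually_ge_atTop a] with y hy
  have := hmono self_mem_Ici hy hy
  linarith

lemma tendsto_mul_add_mul_log_atTop {e c : ℝ} (he : 0 ≤ e) (hc : 0 ≤ c)
    (h : 0 < e ∨ 0 < c) :
    Tendsto (fun y => e * y + c * log y) atTop atTop := by
  rcases h with he' | hc'
  · refine tendsto_atTop_add_right_of_le' _ 0 (tendsto_id.const_mul_atTop he') ?_
    filter_upwards [eventually_ge_atTop 1] with y hy
    exact mul_nonneg hc (log_nonneg hy)
  · refine tendsto_atTop_add_left_of_le' _ 0 ?_ (tendsto_log_atTop.const_mul_atTop hc')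
    filter_upwards [eventually_ge_atTop 0] with y hy
    exact mul_nonneg he hy

lemma hasDerivAt_mul_add_mul_log (e c : ℝ) {y : ℝ} (hy : 0 < y) :
    HasDerivAt (fun y => e * y + c * log y) (e + c / y) y := by
  simpa [div_eq_mul_inv] using
    ((hasDerivAt_id' y).const_mul e).fun_add ((hasDerivAt_log hy.ne').const_mul c)

section Riccati

variable {v : ℝ} {L : ℝ → ℝ}

lemma riccati_lt_neg_min
    (hL : ∀ y > 0, HasDerivAt L ((v ^ 2 - L y ^ 2) / y + 2 * L y + 1) y)
    (hL0 : ∀ y > 0, L y ≤ 0) (hv0 : 0 ≤ v) (hv : v ≠ 1 / 2) {x : ℝ} (hx : 0 < x) :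
    L x < -min v (1 / 2) := by
  set m := min v (1 / 2)
  by_contra! hLx
  have hm0 : 0 ≤ m := le_min hv0 (by norm_num)
  have hmv : m ≤ v := min_le_left _ _
  have hm : m ≤ 1 / 2 := min_le_right _ _
  have hpos : 0 < 1 - 2 * m ∨ 0 < v ^ 2 - m ^ 2 := by
    rcases hv.lt_or_gt with h | h
    · left; simp only [m, min_eq_left h.le]; linarith
    · right; simp only [m, min_eq_right h.le]; nlinarith
  have hrhs_pos : ∀ y > 0, 0 < (v ^ 2 - m ^ 2) / y + (1 - 2 * m) := by
    intro y hy
    have := div_nonneg (sub_nonneg.2 (pow_le_pow_left₀ hm0 hmv 2)) hy.le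
    rcases hpos with h | h
    · linarith
    · linarith [div_pos h hy]
  have hstay : ∀ y ≥ x, -m ≤ L y := fun y hy =>
    le_of_hasDerivAt_pos_of_eq (fun z hz => hL z (hx.trans_le hz)) hLx
      (fun z hz hLz => by
        have := hrhs_pos z (hx.trans_le hz)
        rw [hLz]; convert this using 1; ring) hy
  have htop : Tendsto L atTop atTop := by
    refine tendsto_atTop_of_hasDerivAt_ge (a := x) (fun y hy => hL y (hx.trans_le hy))
      (fun y hy => hasDerivAt_mul_add_mul_log (1 - 2 * m) (v ^ 2 - m ^ 2) (hx.trans_le hy))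
      (fun y hy => ?_) (tendsto_mul_add_mul_log_atTop (by linarith) (by nlinarith) hpos)
    have hy0 := hx.trans_le hy
    have h1 := hstay y hy
    have h2 := hL0 y hy0
    have : (v ^ 2 - m ^ 2) / y ≤ (v ^ 2 - L y ^ 2) / y :=
      div_le_div_of_nonneg_right (by nlinarith) hy0.le
    linarith
  obtain ⟨y, hy1, hy2⟩ :=
    ((htop.eventually_gt_atTop 0).and (eventually_gt_atTop 0)).exists
  exact (hL0 y hy2).not_gt hy1

lemma neg_max_lt_riccati
    (hL : ∀ y > 0, HasDerivAt L ((v ^ 2 - L y ^ 2) / y + 2 * L y + 1) y)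
    (hv0 : 0 ≤ v) (hv : v ≠ 1 / 2) {x : ℝ} (hx : 0 < x) :
    -max v (1 / 2) < L x := by
  set M := max v (1 / 2)
  by_contra! hLx
  have hM : 1 / 2 ≤ M := le_max_right _ _
  have hvM : v ≤ M := le_max_left _ _
  have hpos : 0 < 2 * M - 1 ∨ 0 < M ^ 2 - v ^ 2 := by
    rcases hv.lt_or_gt with h | h
    · right; simp only [M, max_eq_right h.le]; nlinarith
    · left; simp only [M, max_eq_left h.le]; linarith
  have hL' : ∀ y > 0, HasDerivAt (fun y => -L y) ((L y ^ 2 - v ^ 2) / y - 2 * L y - 1) y :=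
    fun y hy => (hL y hy).neg.congr_deriv (by ring)
  have hrhs_pos : ∀ y > 0, 0 < (M ^ 2 - v ^ 2) / y + (2 * M - 1) := by
    intro y hy
    have := div_nonneg (sub_nonneg.2 (pow_le_pow_left₀ hv0 hvM 2)) hy.le
    rcases hpos with h | h
    · linarith
    · linarith [div_pos h hy]
  have hstay : ∀ y ≥ x, M ≤ -L y := fun y hy =>
    le_of_hasDerivAt_pos_of_eq (fun z hz => hL' z (hx.trans_le hz)) (by linarith)
      (fun z hz hLz => by
        have := hrhs_pos z (hx.trans_le hz)
        rw [show L z = -M by linarith]; convert this using 1; ring) hy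
  have htop : Tendsto (fun y => -L y) atTop atTop := by
    refine tendsto_atTop_of_hasDerivAt_ge (a := x) (fun y hy => hL' y (hx.trans_le hy))
      (fun y hy => hasDerivAt_mul_add_mul_log (2 * M - 1) (M ^ 2 - v ^ 2) (hx.trans_le hy))
      (fun y hy => ?_) (tendsto_mul_add_mul_log_atTop (by linarith) (by nlinarith) hpos)
    have hy0 := hx.trans_le hy
    have h1 := hstay y hy
    have : (M ^ 2 - v ^ 2) / y ≤ (L y ^ 2 - v ^ 2) / y :=
      div_le_div_of_nonneg_right (by nlinarith) hy0.le
    linarith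
  -- The threshold `2v + 1` makes `L² - v² ≥ L² / 2` and `-2L - 1 ≥ 0`, so `(-L)' ≥ L² / (2y)`.
  obtain ⟨a, ha0, haL⟩ : ∃ a > 0, ∀ y ≥ a, 2 * v + 1 ≤ -L y := by
    obtain ⟨a, ha⟩ := eventually_atTop.1 (htop.eventually_ge_atTop (2 * v + 1))
    exact ⟨max a x, hx.trans_le (le_max_right _ _),
      fun y hy => ha y ((le_max_left _ _).trans hy)⟩
  have hinv : ∀ y ≥ a, HasDerivAt (fun y => (L y)⁻¹)
      (-((v ^ 2 - L y ^ 2) / y + 2 * L y + 1) / L y ^ 2) y := fun y hy =>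
    (hL y (ha0.trans_le hy)).inv (by linarith [haL y hy])
  have htop' : Tendsto (fun y => (L y)⁻¹) atTop atTop := by
    refine tendsto_atTop_of_hasDerivAt_ge (a := a) hinv
      (fun y hy => hasDerivAt_mul_add_mul_log 0 (1 / 2) (ha0.trans_le hy))
      (fun y hy => ?_) (tendsto_mul_add_mul_log_atTop le_rfl (by norm_num) (by norm_num))
    have hy0 := ha0.trans_le hy
    have h1 := haL y hy
    have hL2 : 0 < L y ^ 2 := by nlinarith
    rw [le_div_iff₀ hL2]
    have : L y ^ 2 / 2 / y ≤ (L y ^ 2 - v ^ 2) / y :=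
      div_le_div_of_nonneg_right (by nlinarith) hy0.le
    have : (0 + 1 / 2 / y) * L y ^ 2 = L y ^ 2 / 2 / y := by ring
    have : (v ^ 2 - L y ^ 2) / y = -((L y ^ 2 - v ^ 2) / y) := by ring
    linarith
  obtain ⟨y, hy1, hy2⟩ :=
    ((htop'.eventually_gt_atTop 0).and (eventually_ge_atTop a)).exists
  have := haL y hy2
  exact (inv_pos.1 hy1).not_ge (by linarith)

end Riccati

theorem stmt_16 (v : ℝ) (hv0 : 0 ≤ v) (hv : v ≠ 1 / 2)
    (K : ℝ → ℝ)
    (hK : ∀ x, K x = ∫ t in Ioi (0 : ℝ), Real.exp (-x * Real.cosh t) * Real.cosh (v * t)) :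
    ∀ x > (0 : ℝ),
      -x - max v (1 / 2) < x * deriv K x / K x ∧
      x * deriv K x / K x < -x - min v (1 / 2) := by
  intro x hx
  have hKJ : K = besselKMoment v 0 :=
    funext fun y => by simp [hK, besselKMoment, besselKIntegrand]
  have hderiv : deriv K x = -besselKMoment v 1 x := by
    rw [hKJ]; exact (besselKMoment.hasDerivAt v 0 hx).deriv
  have hL : x * deriv K x / K x = besselKRiccati v x - x := by
    rw [hderiv, hKJ, besselKRiccati]; ring
  have hR : ∀ y > 0, HasDerivAt (besselKRiccati v)
      ((v ^ 2 - besselKRiccati v y ^ 2) / y + 2 * besselKRiccati v y + 1) y :=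
    fun y hy => hasDerivAt_besselKRiccati hy
  rw [hL]
  constructor
  · linarith [neg_max_lt_riccati hR hv0 hv hx]
  · linarith [riccati_lt_neg_min hR (fun y hy => besselKRiccati_nonpos hy) hv0 hv hx]
end
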